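/- arXiv:1707.02719 — 4 statements merged into one kernel-verified Lean document; each statement's English description precedes it below -/
import Mathlib

section
/- Let T > 0, let f : ℝ → ℂ be measurable with ‖f‖_{D(T)} < ∞, and let G : ℝ × [0,T] → ℂ be measurable with ‖G‖_{N₊(T)} < ∞, and suppose the function u(x,t) = f(x−t) + i ∫₀^t G(x−t+s, s) ds is well defined. Then: (a) for every t ∈ [0,T], ‖u(·,t)‖_{D(T)} ≤ ‖f‖_{D(T)} + ‖G‖_{N₊(T)}; (b) ‖u‖_{X₊(T)} ≤ ‖f‖_{D(T)} + ‖G‖_{N₊(T)}; (c) the function p(y) = |f(y)| + ∫₀^T |G(y+s,s)| ds satisfies |u(x,t)| ≤ p(x−t) for all (x,t) ∈ ℝ × [0,T] and ‖p‖_{D(T)} ≤ ‖f‖_{D(T)} + ‖G‖_{N₊(T)}. In particular the sum of the three quantities in (a), (b), (c) is at most 3‖f‖_{D(T)} + 3‖G‖_{N₊(T)}. -/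
/-!
Along the characteristic through `(x, t)` one has `|u(x,t)| ≤ p(x − t)`, so each norm of `u`
is controlled by `‖p‖_{D(T)}`, and `‖p‖_{D(T)} ≤ ‖f‖_{D(T)} + ‖G‖_{N₊(T)}` by Minkowski's
inequality on every ray. For `u(·,t)` this uses that the `D(T)` norm is translation invariant;
for the `X₊(T)` norm, the reflection `s ↦ T − s` turns the backward ray `t ↦ x − 2t` into the
forward ray `s ↦ (x − 2T) + 2s` over which the `D(T)` norm is taken.
-/

open MeasureTheory Set

/-- The `D(T)` norm: `‖f‖_{D(T)} = sup_{x ∈ ℝ} (∫₀^T |f(x+2s)|² ds)^{1/2}`,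
for a nonnegative (extended-real-valued) density `g`. -/
noncomputable def DnormE (T : ℝ) (g : ℝ → ENNReal) : ENNReal :=
  ⨆ x : ℝ, (∫⁻ s in Set.Ioc (0:ℝ) T, (g (x + 2*s))^2) ^ (1/2 : ℝ)

/-- The `D(T)` norm of a complex-valued function. -/
noncomputable def Dnorm (T : ℝ) (f : ℝ → ℂ) : ENNReal :=
  DnormE T (fun y => (‖f y‖₊ : ENNReal))

/-- `‖u‖_{X₊(T)} = sup_{x ∈ ℝ} (∫₀^T |u(x−t,t)|² dt)^{1/2}`. -/
noncomputable def Xplus (T : ℝ) (u : ℝ → ℝ → ℂ) : ENNReal :=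
  ⨆ x : ℝ, (∫⁻ t in Set.Ioc (0:ℝ) T, (‖u (x - t) t‖₊ : ENNReal)^2) ^ (1/2 : ℝ)

/-- `‖F‖_{N₊(T)}`: the `D(T)` norm of `y ↦ ∫₀^T |F(y+s,s)| ds`. -/
noncomputable def Nplus (T : ℝ) (F : ℝ → ℝ → ℂ) : ENNReal :=
  DnormE T (fun y => ∫⁻ s in Set.Ioc (0:ℝ) T, (‖F (y + s) s‖₊ : ENNReal))

open scoped ENNReal

lemma setLIntegral_Ioc_comp_sub_left (h : ℝ → ℝ≥0∞) (T : ℝ) :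
    ∫⁻ t in Ioc 0 T, h (T - t) = ∫⁻ t in Ioc 0 T, h t := by
  have hpre : (fun t : ℝ => T - t) ⁻¹' Ioc 0 T = Ico 0 T := by
    ext t; simp only [mem_preimage, mem_Ioc, mem_Ico, sub_pos, sub_le_self_iff]; tauto
  rw [← (Measure.measurePreserving_sub_left volume T).setLIntegral_comp_preimage_emb
    (MeasurableEquiv.subLeft T).measurableEmbedding h, hpre,
    setLIntegral_congr (Ico_ae_eq_Ioc (μ := volume))]

lemma DnormE_mono {T : ℝ} {g h : ℝ → ℝ≥0∞} (hgh : ∀ y, g y ≤ h y) :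
    DnormE T g ≤ DnormE T h :=
  iSup_mono fun _ => by gcongr; exact hgh _

lemma DnormE_comp_sub_const (T c : ℝ) (g : ℝ → ℝ≥0∞) :
    DnormE T (fun y => g (y - c)) = DnormE T g := by
  unfold DnormE
  rw [← (Equiv.addRight c).iSup_comp]
  simp only [Equiv.coe_addRight, add_right_comm _ c, add_sub_cancel_right]

lemma DnormE_eq_iSup_sub_two_mul (T : ℝ) (g : ℝ → ℝ≥0∞) :
    DnormE T g = ⨆ x : ℝ, (∫⁻ t in Ioc 0 T, g (x - 2 * t) ^ 2) ^ (1/2 : ℝ) := by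
  unfold DnormE
  rw [← (Equiv.subRight (2 * T)).iSup_comp]
  refine iSup_congr fun x => ?_
  rw [← setLIntegral_Ioc_comp_sub_left _ T]
  simp only [Equiv.subRight_apply]
  ring_nf

lemma DnormE_add_le (T : ℝ) {g h : ℝ → ℝ≥0∞} (hg : Measurable g) (hh : Measurable h) :
    DnormE T (fun y => g y + h y) ≤ DnormE T g + DnormE T h := by
  unfold DnormE
  refine iSup_le fun x => ?_
  have hray : Measurable fun s : ℝ => x + 2 * s := by fun_prop
  have minkowski := ENNReal.lintegral_Lp_add_le (μ := volume.restrict (Ioc 0 T))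
    (hg.comp hray).aemeasurable (hh.comp hray).aemeasurable one_le_two
  simp only [Pi.add_apply, Function.comp_apply, ENNReal.rpow_two] at minkowski
  exact minkowski.trans <| add_le_add (le_iSup_of_le x le_rfl) (le_iSup_of_le x le_rfl)

lemma Dnorm_le_DnormE_comp_sub {T c : ℝ} {v : ℝ → ℂ} {p : ℝ → ℝ≥0∞}
    (hvp : ∀ x, (‖v x‖₊ : ℝ≥0∞) ≤ p (x - c)) :
    Dnorm T v ≤ DnormE T p :=
  (DnormE_mono hvp).trans_eq (DnormE_comp_sub_const T c p)

lemma Xplus_le_DnormE {T : ℝ} {u : ℝ → ℝ → ℂ} {p : ℝ → ℝ≥0∞}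
    (hup : ∀ x, ∀ t ∈ Ioc 0 T, (‖u x t‖₊ : ℝ≥0∞) ≤ p (x - t)) :
    Xplus T u ≤ DnormE T p := by
  rw [DnormE_eq_iSup_sub_two_mul]
  refine iSup_mono fun x => ?_
  gcongr ?_ ^ _
  refine setLIntegral_mono' measurableSet_Ioc fun t ht => ?_
  have := hup (x - t) t ht
  rw [sub_sub, ← two_mul] at this
  gcongr

lemma nnnorm_add_I_mul_setIntegral_le {a : ℂ} {φ : ℝ → ℂ} {t T : ℝ} (htT : t ≤ T) :
    (‖a + Complex.I * ∫ s in Ioc 0 t, φ s‖₊ : ℝ≥0∞)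
      ≤ ‖a‖₊ + ∫⁻ s in Ioc 0 T, (‖φ s‖₊ : ℝ≥0∞) := by
  calc (‖a + Complex.I * ∫ s in Ioc 0 t, φ s‖₊ : ℝ≥0∞)
      ≤ ‖a‖₊ + ‖∫ s in Ioc 0 t, φ s‖ₑ := by
        simpa [enorm_eq_nnnorm] using enorm_add_le a (Complex.I * ∫ s in Ioc 0 t, φ s)
    _ ≤ ‖a‖₊ + ∫⁻ s in Ioc 0 t, ‖φ s‖ₑ := by gcongr; exact enorm_integral_le_lintegral_enorm _
    _ ≤ ‖a‖₊ + ∫⁻ s in Ioc 0 T, (‖φ s‖₊ : ℝ≥0∞) := by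
        gcongr _ + ?_; exact lintegral_mono_set (Ioc_subset_Ioc_right htT)

lemma measurable_setLIntegral_nnnorm_comp_add {F : ℝ → ℝ → ℂ}
    (hF : Measurable (Function.uncurry F)) (S : Set ℝ) :
    Measurable fun y => ∫⁻ s in S, (‖F (y + s) s‖₊ : ℝ≥0∞) :=
  Measurable.lintegral_prod_right' (f := fun q : ℝ × ℝ => (‖F (q.1 + q.2) q.2‖₊ : ℝ≥0∞))
    (hF.comp ((measurable_fst.add measurable_snd).prodMk measurable_snd)).nnnorm.coe_nnreal_ennreal

theorem linear_estimates_general (T : ℝ) (f : ℝ → ℂ) (G : ℝ → ℝ → ℂ)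
    (hfm : Measurable f) (hGm : Measurable (Function.uncurry G))
    (u : ℝ → ℝ → ℂ)
    (hu : ∀ x t, u x t = f (x - t) + Complex.I * ∫ s in Set.Ioc (0:ℝ) t, G (x - t + s) s) :
    (∀ t ∈ Set.Icc (0:ℝ) T, Dnorm T (fun x => u x t) ≤ Dnorm T f + Nplus T G) ∧
    Xplus T u ≤ Dnorm T f + Nplus T G ∧
    (∀ x : ℝ, ∀ t ∈ Set.Icc (0:ℝ) T,
      (‖u x t‖₊ : ENNReal)
        ≤ (‖f (x - t)‖₊ : ENNReal) + ∫⁻ s in Set.Ioc (0:ℝ) T, (‖G (x - t + s) s‖₊ : ENNReal)) ∧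
    DnormE T (fun y => (‖f y‖₊ : ENNReal) + ∫⁻ s in Set.Ioc (0:ℝ) T, (‖G (y + s) s‖₊ : ENNReal))
      ≤ Dnorm T f + Nplus T G ∧
    (∀ t ∈ Set.Icc (0:ℝ) T,
      Dnorm T (fun x => u x t) + Xplus T u +
        DnormE T (fun y => (‖f y‖₊ : ENNReal)
          + ∫⁻ s in Set.Ioc (0:ℝ) T, (‖G (y + s) s‖₊ : ENNReal))
        ≤ 3 * Dnorm T f + 3 * Nplus T G) := by
  set p : ℝ → ℝ≥0∞ := fun y => ‖f y‖₊ + ∫⁻ s in Ioc 0 T, (‖G (y + s) s‖₊ : ℝ≥0∞)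
  have hup : ∀ x, ∀ t ∈ Icc 0 T, (‖u x t‖₊ : ℝ≥0∞) ≤ p (x - t) := fun x t ht => by
    rw [hu]; exact nnnorm_add_I_mul_setIntegral_le ht.2
  have hp : DnormE T p ≤ Dnorm T f + Nplus T G :=
    DnormE_add_le T hfm.nnnorm.coe_nnreal_ennreal (measurable_setLIntegral_nnnorm_comp_add hGm _)
  have ha : ∀ t ∈ Icc 0 T, Dnorm T (fun x => u x t) ≤ Dnorm T f + Nplus T G := fun t ht =>
    (Dnorm_le_DnormE_comp_sub fun x => hup x t ht).trans hp
  have hb : Xplus T u ≤ Dnorm T f + Nplus T G :=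
    (Xplus_le_DnormE fun x t ht => hup x t (Ioc_subset_Icc_self ht)).trans hp
  refine ⟨ha, hb, hup, hp, fun t ht => ?_⟩
  calc Dnorm T (fun x => u x t) + Xplus T u + DnormE T p
      ≤ (Dnorm T f + Nplus T G) + (Dnorm T f + Nplus T G) + (Dnorm T f + Nplus T G) := by
        gcongr; exact ha t ht
    _ = 3 * Dnorm T f + 3 * Nplus T G := by ring

/-- Key linear estimates for the solution `u(x,t) = f(x−t) + i ∫₀^t G(x−t+s,s) ds` of
`(∂_t + ∂_x)u = iG`, `u(x,0) = f(x)`: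
(a) `‖u(·,t)‖_{D(T)} ≤ ‖f‖_{D(T)} + ‖G‖_{N₊(T)}` for every `t ∈ [0,T]`;
(b) `‖u‖_{X₊(T)} ≤ ‖f‖_{D(T)} + ‖G‖_{N₊(T)}`;
(c) `p(y) = |f(y)| + ∫₀^T |G(y+s,s)| ds` majorizes `u` along left-moving characteristics,
    i.e. `|u(x,t)| ≤ p(x−t)`, and `‖p‖_{D(T)} ≤ ‖f‖_{D(T)} + ‖G‖_{N₊(T)}`.
In particular the sum of the three quantities is at most `3‖f‖_{D(T)} + 3‖G‖_{N₊(T)}`. -/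
theorem linear_estimates (T : ℝ) (hT : 0 < T) (f : ℝ → ℂ) (G : ℝ → ℝ → ℂ)
    (hfm : Measurable f) (hGm : Measurable (Function.uncurry G))
    (hfD : Dnorm T f < ⊤) (hGN : Nplus T G < ⊤)
    (hwd : ∀ x : ℝ, ∀ t ∈ Set.Icc (0:ℝ) T,
      IntegrableOn (fun s => G (x - t + s) s) (Set.Ioc (0:ℝ) t))
    (u : ℝ → ℝ → ℂ)
    (hu : ∀ x t, u x t = f (x - t) + Complex.I * ∫ s in Set.Ioc (0:ℝ) t, G (x - t + s) s) :
    (∀ t ∈ Set.Icc (0:ℝ) T, Dnorm T (fun x => u x t) ≤ Dnorm T f + Nplus T G) ∧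
    Xplus T u ≤ Dnorm T f + Nplus T G ∧
    (∀ x : ℝ, ∀ t ∈ Set.Icc (0:ℝ) T,
      (‖u x t‖₊ : ENNReal)
        ≤ (‖f (x - t)‖₊ : ENNReal) + ∫⁻ s in Set.Ioc (0:ℝ) T, (‖G (x - t + s) s‖₊ : ENNReal)) ∧
    DnormE T (fun y => (‖f y‖₊ : ENNReal) + ∫⁻ s in Set.Ioc (0:ℝ) T, (‖G (y + s) s‖₊ : ENNReal))
      ≤ Dnorm T f + Nplus T G ∧
    (∀ t ∈ Set.Icc (0:ℝ) T,
      Dnorm T (fun x => u x t) + Xplus T u +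
        DnormE T (fun y => (‖f y‖₊ : ENNReal)
          + ∫⁻ s in Set.Ioc (0:ℝ) T, (‖G (y + s) s‖₊ : ENNReal))
        ≤ 3 * Dnorm T f + 3 * Nplus T G) :=
  linear_estimates_general T f G hfm hGm u hu
end

section
/- Let T > 0 and let v, v' : ℝ × [0,T] → ℂ be measurable. Then ‖v v'‖_{N₊(T)} ≤ √T ‖v‖_{X₋(T)} ‖v'‖_{X₋(T)}, where v v' denotes the pointwise product. Symmetrically, for measurable u, u' : ℝ × [0,T] → ℂ, ‖u u'‖_{N₋(T)} ≤ √T ‖u‖_{X₊(T)} ‖u'‖_{X₊(T)}. -/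
open MeasureTheory Set

/-- `‖v‖_{X₋(T)} = sup_{x ∈ ℝ} (∫₀^T |v(x+t,t)|² dt)^{1/2}`. -/
noncomputable def Xminus (T : ℝ) (v : ℝ → ℝ → ℂ) : ENNReal :=
  ⨆ x : ℝ, (∫⁻ t in Set.Ioc (0:ℝ) T, (‖v (x + t) t‖₊ : ENNReal)^2) ^ (1/2 : ℝ)

/-- `‖F‖_{N₋(T)}`: the `D(T)` norm of `y ↦ ∫₀^T |F(y−s,s)| ds`. -/
noncomputable def Nminus (T : ℝ) (F : ℝ → ℝ → ℂ) : ENNReal :=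
  DnormE T (fun y => ∫⁻ s in Set.Ioc (0:ℝ) T, (‖F (y - s) s‖₊ : ENNReal))

open scoped ENNReal

/-! Along each characteristic `s ↦ (y ± s, s)` the integrand of `N_±` is a product, so
Cauchy–Schwarz on `(0, T]` bounds the inner integral by the product of the two `L²` norms
along that line, each at most the corresponding `X_∓` norm. The remaining `D(T)` norm of a
function bounded by `A` is at most `(∫₀^T A² ds)^{1/2} = √T A`. -/

lemma ENNReal.ofReal_rpow_one_half (T : ℝ) :
    ENNReal.ofReal T ^ (1 / 2 : ℝ) = ENNReal.ofReal √T := by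
  rcases le_total 0 T with hT | hT
  · rw [ENNReal.ofReal_rpow_of_nonneg hT (by norm_num), Real.sqrt_eq_rpow]
  · rw [ENNReal.ofReal_of_nonpos hT, Real.sqrt_eq_zero'.mpr hT, ENNReal.ofReal_zero,
      ENNReal.zero_rpow_of_pos (by norm_num)]

lemma ENNReal.sq_rpow_one_half (A : ℝ≥0∞) : (A ^ 2) ^ (1 / 2 : ℝ) = A := by
  simpa using ENNReal.pow_rpow_inv_natCast two_ne_zero A

lemma DnormE_le_sqrt_mul_of_le {T : ℝ} {g : ℝ → ℝ≥0∞} {A : ℝ≥0∞} (h : ∀ y, g y ≤ A) :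
    DnormE T g ≤ ENNReal.ofReal √T * A := by
  refine iSup_le fun x => ?_
  calc (∫⁻ s in Ioc 0 T, g (x + 2 * s) ^ 2) ^ (1 / 2 : ℝ)
      ≤ (∫⁻ _ in Ioc 0 T, A ^ 2) ^ (1 / 2 : ℝ) :=
        ENNReal.rpow_le_rpow (lintegral_mono fun s => pow_le_pow_left' (h _) 2) (by norm_num)
    _ = ENNReal.ofReal √T * A := by
        rw [setLIntegral_const, Real.volume_Ioc, sub_zero,
          ENNReal.mul_rpow_of_nonneg _ _ (by norm_num), ENNReal.sq_rpow_one_half,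
          ENNReal.ofReal_rpow_one_half, mul_comm]

lemma lintegral_nnnorm_mul_le {α R : Type*} [MeasurableSpace α] [SeminormedRing R]
    {μ : Measure α} {f g : α → R} (hf : AEMeasurable (fun a => (‖f a‖₊ : ℝ≥0∞)) μ)
    (hg : AEMeasurable (fun a => (‖g a‖₊ : ℝ≥0∞)) μ) :
    ∫⁻ a, ‖f a * g a‖₊ ∂μ ≤
      (∫⁻ a, (‖f a‖₊ : ℝ≥0∞) ^ 2 ∂μ) ^ (1 / 2 : ℝ) *
        (∫⁻ a, (‖g a‖₊ : ℝ≥0∞) ^ 2 ∂μ) ^ (1 / 2 : ℝ) := by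
  calc ∫⁻ a, ‖f a * g a‖₊ ∂μ ≤ ∫⁻ a, (‖f a‖₊ : ℝ≥0∞) * ‖g a‖₊ ∂μ :=
        lintegral_mono fun a => ENNReal.coe_le_coe.mpr (nnnorm_mul_le (f a) (g a))
    _ ≤ _ := by
        simpa only [ENNReal.rpow_two, Pi.mul_apply] using
          ENNReal.lintegral_mul_le_Lp_mul_Lq μ Real.HolderConjugate.two_two hf hg

/-- With `φ x t = x - t` this is `X₊(T)`, with `φ x t = x + t` it is `X₋(T)`. -/
noncomputable def supLineL2 (T : ℝ) (φ : ℝ → ℝ → ℝ) (v : ℝ → ℝ → ℂ) : ℝ≥0∞ :=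
  ⨆ x : ℝ, (∫⁻ t in Ioc 0 T, (‖v (φ x t) t‖₊ : ℝ≥0∞) ^ 2) ^ (1 / 2 : ℝ)

lemma DnormE_lintegral_mul_le_supLineL2 (T : ℝ) {φ : ℝ → ℝ → ℝ} (hφ : ∀ x, Measurable (φ x))
    {v v' : ℝ → ℝ → ℂ} (hv : Measurable (Function.uncurry v))
    (hv' : Measurable (Function.uncurry v')) :
    DnormE T (fun x => ∫⁻ s in Ioc 0 T, ‖v (φ x s) s * v' (φ x s) s‖₊) ≤
      ENNReal.ofReal √T * supLineL2 T φ v * supLineL2 T φ v' := by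
  have along {w : ℝ → ℝ → ℂ} (hw : Measurable (Function.uncurry w)) (x : ℝ) :
      Measurable fun s => (‖w (φ x s) s‖₊ : ℝ≥0∞) :=
    (hw.comp ((hφ x).prodMk measurable_id)).enorm
  rw [mul_assoc]
  exact DnormE_le_sqrt_mul_of_le fun x =>
    (lintegral_nnnorm_mul_le (along hv x).aemeasurable (along hv' x).aemeasurable).trans
      (mul_le_mul' (le_iSup_of_le x le_rfl) (le_iSup_of_le x le_rfl))

theorem bilinear_estimates_general (T : ℝ) (u u' v v' : ℝ → ℝ → ℂ)
    (hu : Measurable (Function.uncurry u)) (hu' : Measurable (Function.uncurry u'))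
    (hv : Measurable (Function.uncurry v)) (hv' : Measurable (Function.uncurry v')) :
    Nplus T (fun x t => v x t * v' x t)
        ≤ ENNReal.ofReal (Real.sqrt T) * Xminus T v * Xminus T v' ∧
    Nminus T (fun x t => u x t * u' x t)
        ≤ ENNReal.ofReal (Real.sqrt T) * Xplus T u * Xplus T u' :=
  ⟨DnormE_lintegral_mul_le_supLineL2 T measurable_const_add hv hv',
    DnormE_lintegral_mul_le_supLineL2 T measurable_const_sub hu hu'⟩

/-- Bilinear (null form) estimates:
`‖v v'‖_{N₊(T)} ≤ √T ‖v‖_{X₋(T)} ‖v'‖_{X₋(T)}` and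
`‖u u'‖_{N₋(T)} ≤ √T ‖u‖_{X₊(T)} ‖u'‖_{X₊(T)}`. -/
theorem bilinear_estimates (T : ℝ) (hT : 0 < T) (u u' v v' : ℝ → ℝ → ℂ)
    (hu : Measurable (Function.uncurry u)) (hu' : Measurable (Function.uncurry u'))
    (hv : Measurable (Function.uncurry v)) (hv' : Measurable (Function.uncurry v')) :
    Nplus T (fun x t => v x t * v' x t)
        ≤ ENNReal.ofReal (Real.sqrt T) * Xminus T v * Xminus T v' ∧
    Nminus T (fun x t => u x t * u' x t)
        ≤ ENNReal.ofReal (Real.sqrt T) * Xplus T u * Xplus T u' :=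
  bilinear_estimates_general T u u' v v' hu hu' hv hv'
end

section
/- Let T > 0 and let v, u : ℝ × [0,T] → ℂ be measurable. Suppose p : ℝ → [0,∞) is measurable and |u(x,t)| ≤ p(x−t) for all (x,t) ∈ ℝ × [0,T]. Then ‖v u‖_{N₊(T)} ≤ √T ‖v‖_{X₋(T)} ‖p‖_{D(T)}, where v u denotes the pointwise product. Symmetrically, if q : ℝ → [0,∞) satisfies |v(x,t)| ≤ q(x+t) for all (x,t), then ‖u v‖_{N₋(T)} ≤ √T ‖u‖_{X₊(T)} ‖q‖_{D(T)}. -/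
open MeasureTheory Set

/-! Along the line `s ↦ (y + s, s)` the quantity `x - t` is constantly `y`, so there `|u| ≤ p y`
and the inner integral of `N₊` is at most `p y · ∫₀^T |v(y+s,s)| ds ≤ p y · √T ‖v‖_{X₋(T)}` by
Cauchy–Schwarz. The `D(T)` norm is monotone and positively homogeneous, which gives the first
estimate; the second is the same argument along the lines `s ↦ (y - s, s)`. -/

open scoped ENNReal

lemma lintegral_le_measure_univ_rpow_mul {α : Type*} [MeasurableSpace α] (μ : Measure α)
    {f : α → ℝ≥0∞} (hf : AEMeasurable f μ) :
    ∫⁻ a, f a ∂μ ≤ μ univ ^ (1/2 : ℝ) * (∫⁻ a, f a ^ 2 ∂μ) ^ (1/2 : ℝ) := by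
  simpa [ENNReal.rpow_two] using ENNReal.lintegral_mul_le_Lp_mul_Lq μ
    Real.HolderConjugate.two_two (f := fun _ => 1) aemeasurable_const hf

lemma volume_Ioc_zero_rpow_half (T : ℝ) :
    volume (Ioc 0 T) ^ (1/2 : ℝ) = ENNReal.ofReal √T := by
  rw [Real.volume_Ioc, sub_zero]
  rcases le_total 0 T with hT | hT
  · rw [ENNReal.ofReal_rpow_of_nonneg hT (by norm_num), Real.sqrt_eq_rpow]
  · rw [ENNReal.ofReal_of_nonpos hT, Real.sqrt_eq_zero'.2 hT, ENNReal.ofReal_zero,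
      ENNReal.zero_rpow_of_pos (by norm_num)]

lemma setLIntegral_Ioc_le_sqrt_mul {T : ℝ} {f : ℝ → ℝ≥0∞}
    (hf : AEMeasurable f (volume.restrict (Ioc 0 T))) :
    ∫⁻ s in Ioc 0 T, f s ≤ ENNReal.ofReal √T * (∫⁻ s in Ioc 0 T, f s ^ 2) ^ (1/2 : ℝ) := by
  have h := lintegral_le_measure_univ_rpow_mul _ hf
  rwa [Measure.restrict_apply_univ, volume_Ioc_zero_rpow_half] at h

lemma setLIntegral_Ioc_mul_le_of_le {T : ℝ} {f g : ℝ → ℝ≥0∞} {c : ℝ≥0∞}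
    (hf : AEMeasurable f (volume.restrict (Ioc 0 T))) (hg : ∀ s ∈ Ioc 0 T, g s ≤ c) :
    ∫⁻ s in Ioc 0 T, f s * g s
      ≤ ENNReal.ofReal √T * (∫⁻ s in Ioc 0 T, f s ^ 2) ^ (1/2 : ℝ) * c :=
  calc ∫⁻ s in Ioc 0 T, f s * g s
      ≤ ∫⁻ s in Ioc 0 T, f s * c :=
        setLIntegral_mono' measurableSet_Ioc fun s hs => mul_le_mul_right (hg s hs) _
    _ = (∫⁻ s in Ioc 0 T, f s) * c := lintegral_mul_const'' c hf
    _ ≤ _ := by gcongr; exact setLIntegral_Ioc_le_sqrt_mul hf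

lemma DnormE_le_const_mul {T : ℝ} {c : ℝ≥0∞} {g p : ℝ → ℝ≥0∞} (hp : Measurable p)
    (hg : ∀ y, g y ≤ c * p y) : DnormE T g ≤ c * DnormE T p := by
  refine iSup_le fun x => ?_
  have hpx : Measurable fun s : ℝ => p (x + 2 * s) ^ 2 :=
    (hp.comp ((measurable_const_mul 2).const_add x)).pow_const 2
  calc (∫⁻ s in Ioc 0 T, g (x + 2 * s) ^ 2) ^ (1/2 : ℝ)
      ≤ (∫⁻ s in Ioc 0 T, c ^ 2 * p (x + 2 * s) ^ 2) ^ (1/2 : ℝ) := by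
        gcongr with s
        rw [← mul_pow]
        exact pow_le_pow_left' (hg _) 2
    _ = c * (∫⁻ s in Ioc 0 T, p (x + 2 * s) ^ 2) ^ (1/2 : ℝ) := by
        have hc : (c ^ 2) ^ (1/2 : ℝ) = c := by
          simpa using ENNReal.pow_rpow_inv_natCast two_ne_zero c
        rw [lintegral_const_mul _ hpx, ENNReal.mul_rpow_of_nonneg _ _ (by norm_num), hc]
    _ ≤ c * DnormE T p := by
        gcongr
        exact le_iSup (fun x => (∫⁻ s in Ioc 0 T, p (x + 2 * s) ^ 2) ^ (1/2 : ℝ)) x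

theorem Nplus_mul_le {T : ℝ} {u v : ℝ → ℝ → ℂ} {p : ℝ → ℝ≥0∞}
    (hv : Measurable (Function.uncurry v)) (hp : Measurable p)
    (hup : ∀ x, ∀ t ∈ Ioc 0 T, (‖u x t‖₊ : ℝ≥0∞) ≤ p (x - t)) :
    Nplus T (fun x t => v x t * u x t) ≤ ENNReal.ofReal √T * Xminus T v * DnormE T p := by
  refine DnormE_le_const_mul hp fun y => ?_
  have hvy : Measurable fun s => (‖v (y + s) s‖₊ : ℝ≥0∞) :=
    (hv.comp ((measurable_const_add y).prodMk measurable_id)).nnnorm.coe_nnreal_ennreal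
  calc ∫⁻ s in Ioc 0 T, (‖v (y + s) s * u (y + s) s‖₊ : ℝ≥0∞)
      = ∫⁻ s in Ioc 0 T, (‖v (y + s) s‖₊ : ℝ≥0∞) * ‖u (y + s) s‖₊ := by
        simp only [nnnorm_mul, ENNReal.coe_mul]
    _ ≤ ENNReal.ofReal √T * (∫⁻ s in Ioc 0 T, (‖v (y + s) s‖₊ : ℝ≥0∞) ^ 2) ^ (1/2 : ℝ) * p y :=
        setLIntegral_Ioc_mul_le_of_le hvy.aemeasurable fun s hs => by
          simpa using hup (y + s) s hs
    _ ≤ ENNReal.ofReal √T * Xminus T v * p y := by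
        gcongr
        exact le_iSup (fun x => (∫⁻ t in Ioc 0 T, (‖v (x + t) t‖₊ : ℝ≥0∞) ^ 2) ^ (1/2 : ℝ)) y

theorem Nminus_mul_le {T : ℝ} {u v : ℝ → ℝ → ℂ} {q : ℝ → ℝ≥0∞}
    (hu : Measurable (Function.uncurry u)) (hq : Measurable q)
    (hvq : ∀ x, ∀ t ∈ Ioc 0 T, (‖v x t‖₊ : ℝ≥0∞) ≤ q (x + t)) :
    Nminus T (fun x t => u x t * v x t) ≤ ENNReal.ofReal √T * Xplus T u * DnormE T q := by
  refine DnormE_le_const_mul hq fun y => ?_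
  have huy : Measurable fun s => (‖u (y - s) s‖₊ : ℝ≥0∞) :=
    (hu.comp ((measurable_const_sub y).prodMk measurable_id)).nnnorm.coe_nnreal_ennreal
  calc ∫⁻ s in Ioc 0 T, (‖u (y - s) s * v (y - s) s‖₊ : ℝ≥0∞)
      = ∫⁻ s in Ioc 0 T, (‖u (y - s) s‖₊ : ℝ≥0∞) * ‖v (y - s) s‖₊ := by
        simp only [nnnorm_mul, ENNReal.coe_mul]
    _ ≤ ENNReal.ofReal √T * (∫⁻ s in Ioc 0 T, (‖u (y - s) s‖₊ : ℝ≥0∞) ^ 2) ^ (1/2 : ℝ) * q y :=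
        setLIntegral_Ioc_mul_le_of_le huy.aemeasurable fun s hs => by
          simpa using hvq (y - s) s hs
    _ ≤ ENNReal.ofReal √T * Xplus T u * q y := by
        gcongr
        exact le_iSup (fun x => (∫⁻ t in Ioc 0 T, (‖u (x - t) t‖₊ : ℝ≥0∞) ^ 2) ^ (1/2 : ℝ)) y

theorem mixed_bilinear_estimates_general (T : ℝ) (u v : ℝ → ℝ → ℂ)
    (hu : Measurable (Function.uncurry u)) (hv : Measurable (Function.uncurry v))
    (p q : ℝ → ENNReal) (hp : Measurable p) (hq : Measurable q)
    (hup : ∀ x : ℝ, ∀ t ∈ Set.Icc (0:ℝ) T, (‖u x t‖₊ : ENNReal) ≤ p (x - t))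
    (hvq : ∀ x : ℝ, ∀ t ∈ Set.Icc (0:ℝ) T, (‖v x t‖₊ : ENNReal) ≤ q (x + t)) :
    Nplus T (fun x t => v x t * u x t)
        ≤ ENNReal.ofReal (Real.sqrt T) * Xminus T v * DnormE T p ∧
    Nminus T (fun x t => u x t * v x t)
        ≤ ENNReal.ofReal (Real.sqrt T) * Xplus T u * DnormE T q :=
  ⟨Nplus_mul_le hv hp fun x t ht => hup x t (Ioc_subset_Icc_self ht),
    Nminus_mul_le hu hq fun x t ht => hvq x t (Ioc_subset_Icc_self ht)⟩

/-- Mixed bilinear estimates: if `|u(x,t)| ≤ p(x−t)` then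
`‖v u‖_{N₊(T)} ≤ √T ‖v‖_{X₋(T)} ‖p‖_{D(T)}`, and symmetrically, if `|v(x,t)| ≤ q(x+t)` then
`‖u v‖_{N₋(T)} ≤ √T ‖u‖_{X₊(T)} ‖q‖_{D(T)}`. -/
theorem mixed_bilinear_estimates (T : ℝ) (hT : 0 < T) (u v : ℝ → ℝ → ℂ)
    (hu : Measurable (Function.uncurry u)) (hv : Measurable (Function.uncurry v))
    (p q : ℝ → ENNReal) (hp : Measurable p) (hq : Measurable q)
    (hup : ∀ x : ℝ, ∀ t ∈ Set.Icc (0:ℝ) T, (‖u x t‖₊ : ENNReal) ≤ p (x - t))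
    (hvq : ∀ x : ℝ, ∀ t ∈ Set.Icc (0:ℝ) T, (‖v x t‖₊ : ENNReal) ≤ q (x + t)) :
    Nplus T (fun x t => v x t * u x t)
        ≤ ENNReal.ofReal (Real.sqrt T) * Xminus T v * DnormE T p ∧
    Nminus T (fun x t => u x t * v x t)
        ≤ ENNReal.ofReal (Real.sqrt T) * Xplus T u * DnormE T q :=
  mixed_bilinear_estimates_general T u v hu hv p q hp hq hup hvq
end

section
/- Let T > 0 and let u, v : ℝ × [0,T] → ℂ be measurable with sup_{0 ≤ s ≤ T} ‖u(·,s)‖_{D(T)} < ∞ and sup_{0 ≤ s ≤ T} ‖v(·,s)‖_{D(T)} < ∞. Then for every (x,t) ∈ ℝ × [0,T], |W(uv)(x,t)| ≤ 2 ∫₀^T ‖u(·,s)‖_{D(T)} ‖v(·,s)‖_{D(T)} ds, where uv denotes the pointwise product. -/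
open MeasureTheory Set
open scoped ENNReal

/-- The wave-operator integral `W F(x,t) = ∫₀^t ∫_{x−(t−s)}^{x+(t−s)} F(y,s) dy ds`. -/
noncomputable def W (F : ℝ → ℝ → ℂ) (x t : ℝ) : ℂ :=
  ∫ s in (0:ℝ)..t, ∫ y in (x - (t - s))..(x + (t - s)), F y s

/-! For fixed `s` the inner integral of `W` runs over an interval of length `2(t - s) ≤ 2T`.
After the substitution `y = a + 2σ`, the `L²` norm of a function over such an interval is at most
`√2` times its `D(T)` norm, so Cauchy–Schwarz bounds the inner integral by
`2 ‖u(·,s)‖_{D(T)} ‖v(·,s)‖_{D(T)}`; integrating in `s` gives the claim. -/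

theorem lintegral_Ioc_comp_affine {c : ℝ} (hc : 0 < c) (g : ℝ → ℝ≥0∞) (a T : ℝ) :
    ∫⁻ y in Ioc a (a + c * T), g y = ENNReal.ofReal c * ∫⁻ s in Ioc 0 T, g (a + c * s) := by
  have himage : (fun s => c * s + a) '' Ioc 0 T = Ioc a (a + c * T) := by
    rw [image_affine_Ioc hc]
    ring_nf
  rw [← himage, lintegral_image_eq_lintegral_abs_deriv_mul (f' := fun _ => c) measurableSet_Ioc
      (fun s _ => (((hasDerivAt_id' s).const_mul c).add_const a).hasDerivWithinAt.congr_deriv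
        (mul_one c))
      (fun s₁ _ s₂ _ h => by simpa [hc.ne'] using h) g,
    abs_of_pos hc, lintegral_const_mul' _ _ ENNReal.ofReal_ne_top]
  simp only [add_comm]

theorem lintegral_sq_le_DnormE_sq (T : ℝ) (g : ℝ → ℝ≥0∞) (x : ℝ) :
    ∫⁻ s in Ioc 0 T, g (x + 2 * s) ^ 2 ≤ DnormE T g ^ 2 := by
  have h : (∫⁻ s in Ioc 0 T, g (x + 2 * s) ^ 2) ^ (1 / 2 : ℝ) ≤ DnormE T g :=
    le_iSup (fun x => (∫⁻ s in Ioc (0:ℝ) T, g (x + 2 * s) ^ 2) ^ (1 / 2 : ℝ)) x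
  rwa [one_div, ENNReal.rpow_inv_le_iff two_pos, ENNReal.rpow_two] at h

theorem lintegral_Ioc_sq_le_two_mul_DnormE_sq {T a b : ℝ} (g : ℝ → ℝ≥0∞) (hb : b ≤ a + 2 * T) :
    ∫⁻ y in Ioc a b, g y ^ 2 ≤ 2 * DnormE T g ^ 2 :=
  calc ∫⁻ y in Ioc a b, g y ^ 2
      ≤ ∫⁻ y in Ioc a (a + 2 * T), g y ^ 2 := lintegral_mono_set (Ioc_subset_Ioc_right hb)
    _ = 2 * ∫⁻ s in Ioc 0 T, g (a + 2 * s) ^ 2 := by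
      rw [lintegral_Ioc_comp_affine two_pos, ENNReal.ofReal_ofNat]
    _ ≤ 2 * DnormE T g ^ 2 := by gcongr; exact lintegral_sq_le_DnormE_sq T g a

theorem lintegral_Ioc_mul_le_two_mul_DnormE {T a b : ℝ} {f g : ℝ → ℝ≥0∞}
    (hf : Measurable f) (hg : Measurable g) (hb : b ≤ a + 2 * T) :
    ∫⁻ y in Ioc a b, f y * g y ≤ 2 * (DnormE T f * DnormE T g) := by
  have hL2 : ∀ h : ℝ → ℝ≥0∞,
      (∫⁻ y in Ioc a b, h y ^ (2 : ℝ)) ^ (1 / 2 : ℝ) ≤ 2 ^ (1 / 2 : ℝ) * DnormE T h := by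
    intro h
    rw [one_div, ENNReal.rpow_inv_le_iff two_pos, ENNReal.mul_rpow_of_nonneg _ _ zero_le_two,
      ← ENNReal.rpow_mul, inv_mul_cancel₀ two_ne_zero, ENNReal.rpow_one]
    simpa only [ENNReal.rpow_two] using lintegral_Ioc_sq_le_two_mul_DnormE_sq h hb
  calc ∫⁻ y in Ioc a b, f y * g y
      ≤ (∫⁻ y in Ioc a b, f y ^ (2 : ℝ)) ^ (1 / 2 : ℝ)
          * (∫⁻ y in Ioc a b, g y ^ (2 : ℝ)) ^ (1 / 2 : ℝ) :=
      ENNReal.lintegral_mul_le_Lp_mul_Lq _ .two_two hf.aemeasurable hg.aemeasurable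
    _ ≤ (2 ^ (1 / 2 : ℝ) * DnormE T f) * (2 ^ (1 / 2 : ℝ) * DnormE T g) :=
      mul_le_mul' (hL2 f) (hL2 g)
    _ = 2 * (DnormE T f * DnormE T g) := by
      rw [mul_mul_mul_comm, ← ENNReal.rpow_add _ _ two_ne_zero ENNReal.ofNat_ne_top]
      norm_num

theorem enorm_intervalIntegral_mul_le_two_mul_Dnorm {T a b : ℝ} {f g : ℝ → ℂ}
    (hf : Measurable f) (hg : Measurable g) (hab : a ≤ b) (hb : b ≤ a + 2 * T) :
    ‖∫ y in a..b, f y * g y‖ₑ ≤ 2 * (Dnorm T f * Dnorm T g) := by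
  rw [intervalIntegral.integral_of_le hab]
  refine (enorm_integral_le_lintegral_enorm _).trans ?_
  simp only [enorm_mul]
  exact lintegral_Ioc_mul_le_two_mul_DnormE hf.enorm hg.enorm hb

theorem W_bound_general (T : ℝ) (u v : ℝ → ℝ → ℂ)
    (hu : Measurable (Function.uncurry u)) (hv : Measurable (Function.uncurry v)) :
    ∀ x : ℝ, ∀ t ∈ Set.Icc (0:ℝ) T,
      (‖W (fun y s => u y s * v y s) x t‖₊ : ENNReal)
        ≤ 2 * ∫⁻ s in Set.Ioc (0:ℝ) T, Dnorm T (fun x' => u x' s) * Dnorm T (fun x' => v x' s) := by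
  rintro x t ⟨ht0, htT⟩
  calc ‖W (fun y s => u y s * v y s) x t‖ₑ
      ≤ ∫⁻ s in Ioc 0 t, ‖∫ y in (x - (t - s))..(x + (t - s)), u y s * v y s‖ₑ := by
        rw [W, intervalIntegral.integral_of_le ht0]
        exact enorm_integral_le_lintegral_enorm _
    _ ≤ ∫⁻ s in Ioc 0 t, 2 * (Dnorm T (fun x' => u x' s) * Dnorm T (fun x' => v x' s)) :=
      setLIntegral_mono' measurableSet_Ioc fun s ⟨hs0, _⟩ =>
        enorm_intervalIntegral_mul_le_two_mul_Dnorm hu.of_uncurry_right hv.of_uncurry_right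
          (by linarith) (by linarith)
    _ ≤ ∫⁻ s in Ioc 0 T, 2 * (Dnorm T (fun x' => u x' s) * Dnorm T (fun x' => v x' s)) :=
      lintegral_mono_set (Ioc_subset_Ioc_right htT)
    _ = 2 * ∫⁻ s in Ioc 0 T, Dnorm T (fun x' => u x' s) * Dnorm T (fun x' => v x' s) :=
      lintegral_const_mul' 2 _ ENNReal.ofNat_ne_top

/-- For `u, v` with slices bounded in `D(T)`, one has
`|W(uv)(x,t)| ≤ 2 ∫₀^T ‖u(·,s)‖_{D(T)} ‖v(·,s)‖_{D(T)} ds` on `ℝ × [0,T]`. -/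
theorem W_bound (T : ℝ) (hT : 0 < T) (u v : ℝ → ℝ → ℂ)
    (hu : Measurable (Function.uncurry u)) (hv : Measurable (Function.uncurry v))
    (hub : (⨆ s ∈ Set.Icc (0:ℝ) T, Dnorm T (fun x => u x s)) < ⊤)
    (hvb : (⨆ s ∈ Set.Icc (0:ℝ) T, Dnorm T (fun x => v x s)) < ⊤) :
    ∀ x : ℝ, ∀ t ∈ Set.Icc (0:ℝ) T,
      (‖W (fun y s => u y s * v y s) x t‖₊ : ENNReal)
        ≤ 2 * ∫⁻ s in Set.Ioc (0:ℝ) T, Dnorm T (fun x' => u x' s) * Dnorm T (fun x' => v x' s) :=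
  W_bound_general T u v hu hv
end
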